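/- Let n ≥ 1, S = ℚ[x_1,…,x_n], let M_n ⊆ S^{n+1} be the spline module of the fan P_2(A_n), and let D_n ⊆ Der_ℚ(S) be the module of logarithmic derivations of the essential braid arrangement. Then the map Φ : S × D_n → M_n defined by Φ(g, θ) = (g, g + θ(x_1), …, g + θ(x_n)) is a well-defined isomorphism of S-modules; in particular the module C^0(P_2(A_n)) of continuous splines on the fan P_2(A_n) is isomorphic to S ⊕ D(A_n), realizing the equivariant Chow cohomology A*_T(X_{P_2(A_n)})_ℚ as the module of logarithmic vector fields tangent to the braid arrangement A_n. -/
import Mathlib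


open MvPolynomial

/-- The ring `S = ℚ[x_1,…,x_n]`. -/
abbrev S (n : ℕ) : Type := MvPolynomial (Fin n) ℚ

/-- The Billera–Rose spline module `M_n = C^0(P_2(A_n)) ⊆ S^{n+1}`: tuples
`(f_0, f_1, …, f_n)` with `x_i ∣ f_0 - f_i` for `1 ≤ i ≤ n` and
`x_i - x_j ∣ f_i - f_j` for `1 ≤ i < j ≤ n`. -/
noncomputable def splineModule (n : ℕ) : Submodule (S n) (Fin (n + 1) → S n) where
  carrier := {f | (∀ i : Fin n, X i ∣ f 0 - f i.succ) ∧
    ∀ i j : Fin n, i < j → (X i - X j) ∣ f i.succ - f j.succ}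
  add_mem' := by
    rintro a b ⟨ha1, ha2⟩ ⟨hb1, hb2⟩
    refine ⟨fun i => ?_, fun i j hij => ?_⟩
    · simpa [sub_add_sub_comm] using dvd_add (ha1 i) (hb1 i)
    · simpa [sub_add_sub_comm] using dvd_add (ha2 i j hij) (hb2 i j hij)
  zero_mem' := by
    refine ⟨fun i => ?_, fun i j _ => ?_⟩ <;> simp
  smul_mem' := by
    rintro c f ⟨h1, h2⟩
    refine ⟨fun i => ?_, fun i j hij => ?_⟩
    · simpa [smul_eq_mul, mul_sub] using (h1 i).mul_left c
    · simpa [smul_eq_mul, mul_sub] using (h2 i j hij).mul_left c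

/-- The module `D_n = D(A_n)` of logarithmic derivations of the essential braid
arrangement `A_n = {x_i = 0} ∪ {x_i = x_j} ⊆ ℚ^n`: derivations `θ` with
`θ(x_i) ∈ ⟨x_i⟩` for `1 ≤ i ≤ n` and `θ(x_i - x_j) ∈ ⟨x_i - x_j⟩` for
`1 ≤ i < j ≤ n`. -/
noncomputable def braidDer (n : ℕ) : Submodule (S n) (Derivation ℚ (S n) (S n)) where
  carrier := {θ | (∀ i : Fin n, X i ∣ θ (X i)) ∧
    ∀ i j : Fin n, i < j → (X i - X j) ∣ θ (X i - X j)}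
  add_mem' := by
    rintro a b ⟨ha1, ha2⟩ ⟨hb1, hb2⟩
    exact ⟨fun i => dvd_add (ha1 i) (hb1 i), fun i j hij => dvd_add (ha2 i j hij) (hb2 i j hij)⟩
  zero_mem' := by
    refine ⟨fun i => ?_, fun i j _ => ?_⟩ <;> simp
  smul_mem' := by
    rintro c θ ⟨h1, h2⟩
    refine ⟨fun i => ?_, fun i j hij => ?_⟩
    · simpa [smul_eq_mul] using (h1 i).mul_left c
    · simpa [smul_eq_mul] using (h2 i j hij).mul_left c

noncomputable def toSpline (n : ℕ) : (S n × braidDer n) →ₗ[S n] splineModule n where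
  toFun p := ⟨Fin.cons p.1 (fun i => p.1 + (p.2 : Derivation ℚ (S n) (S n)) (X i)), by
    refine ⟨fun i => ?_, fun i j hij => ?_⟩
    · have := p.2.2.1 i
      simpa using this.neg_right
    · have := p.2.2.2 i j hij
      simpa [map_sub, sub_sub_sub_cancel_left] using this⟩
  map_add' p q := by
    ext k
    refine Fin.cases ?_ (fun i => ?_) k <;> simp <;> ring
  map_smul' c p := by
    ext k
    refine Fin.cases ?_ (fun i => ?_) k <;> simp [mul_add]

noncomputable def ofSpline (n : ℕ) : splineModule n →ₗ[S n] (S n × braidDer n) where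
  toFun f := ⟨f.1 0, ⟨mkDerivation ℚ (fun i => f.1 i.succ - f.1 0), by
    refine ⟨fun i => ?_, fun i j hij => ?_⟩
    · rw [mkDerivation_X]
      simpa using (f.2.1 i).neg_right
    · rw [map_sub, mkDerivation_X, mkDerivation_X]
      simpa [sub_sub_sub_cancel_right] using f.2.2 i j hij⟩⟩
  map_add' f g := by
    refine Prod.ext (by simp) (Subtype.ext (derivation_ext fun i => ?_))
    simp [mkDerivation_X]
    ring
  map_smul' c f := by
    refine Prod.ext (by simp) (Subtype.ext (derivation_ext fun i => ?_))
    simp [mkDerivation_X, mul_sub]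

theorem chow_cohomology_eq_logarithmic_vector_fields (n : ℕ) (hn : 1 ≤ n) :
    ∃ Φ : (S n × braidDer n) ≃ₗ[S n] splineModule n,
      ∀ (g : S n) (θ : braidDer n),
        (Φ (g, θ) : Fin (n + 1) → S n) =
          Fin.cons g (fun i : Fin n => g + (θ : Derivation ℚ (S n) (S n)) (X i)) := by
  refine ⟨LinearEquiv.ofLinear (toSpline n) (ofSpline n) ?_ ?_, fun g θ => rfl⟩
  · ext f k
    refine Fin.cases ?_ (fun i => ?_) k <;>
      simp [toSpline, ofSpline, mkDerivation_X]
  · refine LinearMap.ext fun p => ?_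
    refine Prod.ext ?_ (Subtype.ext (derivation_ext fun i => ?_))
    · simp [toSpline, ofSpline]
    · simp [toSpline, ofSpline, mkDerivation_X]
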